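/- The set S = {t ∈ (0,1) : t is irrational and e_{i+1}(t) ≥ φ^{d_i(t)} for infinitely many i} has Lebesgue measure zero. -/

import Mathlib

open Filter Topology

/-- Numerators `c_n` of the convergents of the regular continued fraction
`[0; e 1, e 2, ...]` (the value `e 0` is unused). -/
def cfNum (e : ℕ → ℕ) : ℕ → ℕ
  | 0 => 0
  | 1 => 1
  | n + 2 => e (n + 2) * cfNum e (n + 1) + cfNum e n

/-- Denominators `d_n` of the convergents of the regular continued fraction
`[0; e 1, e 2, ...]`. -/
def cfDen (e : ℕ → ℕ) : ℕ → ℕ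
  | 0 => 1
  | 1 => e 1
  | n + 2 => e (n + 2) * cfDen e (n + 1) + cfDen e n

/-- `t` has regular continued fraction expansion `[0; e 1, e 2, ...]`, i.e. the partial
quotients `e i` (for `i ≥ 1`) are positive integers and the convergents tend to `t`. -/
def IsCFExpansion (t : ℝ) (e : ℕ → ℕ) : Prop :=
  (∀ i, 1 ≤ i → 1 ≤ e i) ∧
    Tendsto (fun n => (cfNum e n : ℝ) / (cfDen e n : ℝ)) atTop (𝓝 t)

/-- The set `S = {t ∈ (0,1) : t irrational, e_{i+1}(t) ≥ φ^{d_i(t)} infinitely often}`,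
where `φ = (√5 + 1)/2`. -/
def rrDivergenceSet : Set ℝ :=
  {t | t ∈ Set.Ioo (0 : ℝ) 1 ∧ Irrational t ∧
    ∃ e : ℕ → ℕ, IsCFExpansion t e ∧
      ∀ N : ℕ, ∃ i ≥ N, ((Real.sqrt 5 + 1) / 2) ^ cfDen e i ≤ (e (i + 1) : ℝ)}

/-!
Borel–Cantelli. The convergent `c_i/d_i` of `t` satisfies
`|t - c_i/d_i| ≤ 1/(d_i d_{i+1}) ≤ 1/(d_i² e_{i+1})`, so whenever `e_{i+1} ≥ b^{d_i}` the point `t`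
lies in `A_q = ⋃_{p ≤ 2q} [p/q - r_q, p/q + r_q]` with `q = d_i` and `r_q = 1/(q² b^q)`. Since
`d_i → ∞`, every `t ∈ S` lies in infinitely many `A_q`, while `vol A_q ≤ 6 b^{-q}` is summable.
-/

open MeasureTheory Set

section Convergents

variable {e : ℕ → ℕ}

noncomputable def cfConv (e : ℕ → ℕ) (n : ℕ) : ℝ := (cfNum e n : ℝ) / (cfDen e n)

theorem cfDen_pos (he : ∀ i, 1 ≤ i → 1 ≤ e i) : ∀ n, 0 < cfDen e n
  | 0 => Nat.one_pos
  | 1 => he 1 le_rfl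
  | n + 2 => (cfDen_pos he n).trans_le (Nat.le_add_left _ _)

theorem le_two_mul_cfDen (he : ∀ i, 1 ≤ i → 1 ≤ e i) : ∀ n, n ≤ 2 * cfDen e n
  | 0 => Nat.zero_le _
  | 1 => by have := cfDen_pos he 1; omega
  | n + 2 => by
      have ih := le_two_mul_cfDen he n
      have : 0 < e (n + 2) * cfDen e (n + 1) :=
        Nat.mul_pos (he (n + 2) (by omega)) (cfDen_pos he (n + 1))
      simp only [cfDen]
      omega

theorem tendsto_cfDen_atTop (he : ∀ i, 1 ≤ i → 1 ≤ e i) : Tendsto (cfDen e) atTop atTop :=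
  tendsto_atTop_atTop.2 fun q => ⟨2 * q, fun n hn => by have := le_two_mul_cfDen he n; omega⟩

theorem mul_cfDen_le_cfDen_succ : ∀ n, e (n + 1) * cfDen e n ≤ cfDen e (n + 1)
  | 0 => by simp [cfDen]
  | _ + 1 => Nat.le_add_right _ _

theorem cfNum_succ_mul_cfDen_sub : ∀ n,
    (cfNum e (n + 1) : ℤ) * cfDen e n - cfNum e n * cfDen e (n + 1) = (-1) ^ n
  | 0 => by simp [cfNum, cfDen]
  | n + 1 => by
      have ih := cfNum_succ_mul_cfDen_sub n
      simp only [cfNum, cfDen] at ih ⊢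
      push_cast
      linear_combination -ih

theorem abs_cfConv_succ_sub (he : ∀ i, 1 ≤ i → 1 ≤ e i) (n : ℕ) :
    |cfConv e (n + 1) - cfConv e n| = 1 / ((cfDen e n : ℝ) * cfDen e (n + 1)) := by
  have h₀ : (0 : ℝ) < cfDen e n := by exact_mod_cast cfDen_pos he n
  have h₁ : (0 : ℝ) < cfDen e (n + 1) := by exact_mod_cast cfDen_pos he (n + 1)
  have hdet : (cfNum e (n + 1) : ℝ) * cfDen e n - cfNum e n * cfDen e (n + 1) = (-1) ^ n := by
    exact_mod_cast cfNum_succ_mul_cfDen_sub n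
  have hsub : cfConv e (n + 1) - cfConv e n = (-1) ^ n / ((cfDen e n : ℝ) * cfDen e (n + 1)) := by
    rw [cfConv, cfConv, div_sub_div _ _ h₁.ne' h₀.ne', ← hdet]
    ring
  rw [hsub, abs_div, abs_pow, abs_neg, abs_one, one_pow, abs_of_pos (mul_pos h₀ h₁)]

theorem div_add_mem_uIcc {a b x y : ℝ} (ha : 0 ≤ a) (hb : 0 ≤ b) (hab : 0 < a + b) :
    (a * x + b * y) / (a + b) ∈ uIcc x y := by
  rw [← segment_eq_uIcc, mem_segment_iff_div]
  exact ⟨a, b, ha, hb, hab, by simp only [smul_eq_mul]; field_simp⟩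

theorem cfConv_add_two_mem_uIcc (he : ∀ i, 1 ≤ i → 1 ≤ e i) (n : ℕ) :
    cfConv e (n + 2) ∈ uIcc (cfConv e (n + 1)) (cfConv e n) := by
  have h₀ : (0 : ℝ) < cfDen e n := by exact_mod_cast cfDen_pos he n
  have h₁ : (0 : ℝ) < cfDen e (n + 1) := by exact_mod_cast cfDen_pos he (n + 1)
  have hmean : cfConv e (n + 2) = (((e (n + 2) : ℝ) * cfDen e (n + 1)) * cfConv e (n + 1)
      + cfDen e n * cfConv e n) / ((e (n + 2) : ℝ) * cfDen e (n + 1) + cfDen e n) := by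
    simp only [cfConv, cfNum, cfDen]
    push_cast
    field_simp
  rw [hmean]
  exact div_add_mem_uIcc (by positivity) h₀.le (by positivity)

theorem cfConv_add_mem_uIcc (he : ∀ i, 1 ≤ i → 1 ≤ e i) (n : ℕ) :
    ∀ k, cfConv e (n + k) ∈ uIcc (cfConv e n) (cfConv e (n + 1))
  | 0 => left_mem_uIcc
  | 1 => right_mem_uIcc
  | k + 2 => uIcc_subset_uIcc (cfConv_add_mem_uIcc he n (k + 1)) (cfConv_add_mem_uIcc he n k)
      (cfConv_add_two_mem_uIcc he (n + k))

theorem IsCFExpansion.abs_sub_cfConv_le {t : ℝ} (h : IsCFExpansion t e) (n : ℕ) :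
    |t - cfConv e n| ≤ 1 / ((cfDen e n : ℝ) * cfDen e (n + 1)) := by
  obtain ⟨he, hlim⟩ := h
  have hmem : t ∈ uIcc (cfConv e n) (cfConv e (n + 1)) := by
    refine isClosed_Icc.mem_of_tendsto hlim ?_
    filter_upwards [eventually_ge_atTop n] with m hm
    obtain ⟨k, rfl⟩ := Nat.exists_eq_add_of_le hm
    exact cfConv_add_mem_uIcc he n k
  exact (abs_sub_left_of_mem_uIcc hmem).trans (abs_cfConv_succ_sub he n).le

theorem IsCFExpansion.abs_sub_cfConv_le_of_pow_le {t b : ℝ} (h : IsCFExpansion t e) (hb : 0 < b)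
    {i : ℕ} (hi : b ^ cfDen e i ≤ e (i + 1)) :
    |t - cfConv e i| ≤ 1 / ((cfDen e i : ℝ) ^ 2 * b ^ cfDen e i) := by
  have hd : (0 : ℝ) < cfDen e i := by exact_mod_cast cfDen_pos h.1 i
  have hnext : (e (i + 1) : ℝ) * cfDen e i ≤ cfDen e (i + 1) := by
    exact_mod_cast mul_cfDen_le_cfDen_succ i
  refine (h.abs_sub_cfConv_le i).trans (one_div_le_one_div_of_le (by positivity) ?_)
  calc (cfDen e i : ℝ) ^ 2 * b ^ cfDen e i = cfDen e i * (b ^ cfDen e i * cfDen e i) := by ring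
    _ ≤ cfDen e i * (e (i + 1) * cfDen e i) := by gcongr
    _ ≤ cfDen e i * cfDen e (i + 1) := by gcongr

end Convergents

section BorelCantelli

noncomputable def nearRationals (b : ℝ) (q : ℕ) : Set ℝ :=
  ⋃ p ∈ Finset.range (2 * q + 1), Metric.closedBall ((p : ℝ) / q) (1 / ((q : ℝ) ^ 2 * b ^ q))

theorem volume_nearRationals_le {b : ℝ} (hb : 1 ≤ b) (q : ℕ) :
    volume (nearRationals b q) ≤ ENNReal.ofReal (6 * b⁻¹ ^ q) := by
  have hbq : 0 < b ^ q := by positivity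
  refine (measure_biUnion_finset_le _ _).trans ?_
  simp only [Real.volume_closedBall, Finset.sum_const, Finset.card_range, nsmul_eq_mul]
  rw [← ENNReal.ofReal_natCast, ← ENNReal.ofReal_mul (by positivity)]
  refine ENNReal.ofReal_le_ofReal ?_
  rcases Nat.eq_zero_or_pos q with rfl | hq
  · norm_num
  have hq1 : (1 : ℝ) ≤ q := by exact_mod_cast hq
  rw [inv_pow, ← div_eq_mul_inv, mul_one_div, ← mul_div_assoc,
    div_le_div_iff₀ (by positivity) hbq]
  push_cast
  nlinarith [mul_le_mul_of_nonneg_right (by nlinarith : 4 * (q : ℝ) + 2 ≤ 6 * q ^ 2) hbq.le]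

theorem tsum_volume_nearRationals_ne_top {b : ℝ} (hb : 1 < b) :
    ∑' q, volume (nearRationals b q) ≠ ⊤ := by
  have hgeom : Summable fun q : ℕ => 6 * b⁻¹ ^ q :=
    (summable_geometric_of_lt_one (by positivity) (inv_lt_one_of_one_lt₀ hb)).mul_left 6
  refine ne_top_of_le_ne_top (ENNReal.ofReal_ne_top (r := ∑' q, 6 * b⁻¹ ^ q)) ?_
  rw [ENNReal.ofReal_tsum_of_nonneg (fun q => by positivity) hgeom]
  exact ENNReal.tsum_le_tsum (volume_nearRationals_le hb.le)

theorem mem_nearRationals {t b : ℝ} (ht : t < 1) (hb : 1 ≤ b) {p q : ℕ} (hq : 0 < q)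
    (h : |t - p / q| ≤ 1 / ((q : ℝ) ^ 2 * b ^ q)) : t ∈ nearRationals b q := by
  have hq1 : (1 : ℝ) ≤ q := by exact_mod_cast hq
  have hr : 1 / ((q : ℝ) ^ 2 * b ^ q) ≤ 1 :=
    (div_le_one (by positivity)).2
      (one_le_mul_of_one_le_of_one_le (one_le_pow₀ hq1) (one_le_pow₀ hb))
  have hp : (p : ℝ) / q < 2 := by linarith [(abs_le.1 h).1]
  rw [div_lt_iff₀ (by positivity)] at hp
  simp only [nearRationals, mem_iUnion, Finset.mem_range, Metric.mem_closedBall, Real.dist_eq]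
  exact ⟨p, by exact_mod_cast (by linarith : (p : ℝ) < 2 * q + 1), h⟩

theorem volume_setOf_frequently_pow_cfDen_le {b : ℝ} (hb : 1 < b) :
    volume {t : ℝ | t < 1 ∧ ∃ e : ℕ → ℕ, IsCFExpansion t e ∧
      ∃ᶠ i in atTop, b ^ cfDen e i ≤ (e (i + 1) : ℝ)} = 0 := by
  refine measure_mono_null ?_ (measure_limsup_atTop_eq_zero (tsum_volume_nearRationals_ne_top hb))
  rintro t ⟨ht, e, he, hfreq⟩
  rw [mem_limsup_iff_frequently_mem]
  refine (tendsto_cfDen_atTop he.1).frequently_map _ (fun i hi => ?_) hfreq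
  exact mem_nearRationals ht hb.le (cfDen_pos he.1 i)
    (he.abs_sub_cfConv_le_of_pow_le (by linarith) hi)

end BorelCantelli

theorem stmt2 : MeasureTheory.volume rrDivergenceSet = 0 := by
  have hφ : 1 < (Real.sqrt 5 + 1) / 2 := by rw [add_comm]; exact Real.one_lt_goldenRatio
  refine measure_mono_null ?_ (volume_setOf_frequently_pow_cfDen_le hφ)
  rintro t ⟨⟨-, ht⟩, -, e, he, hio⟩
  exact ⟨ht, e, he, frequently_atTop.2 hio⟩
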